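/- arXiv:2306.04062 — 5 statements merged into one kernel-verified Lean document; each statement's English description precedes it below -/
import Mathlib

section
/- Let G and 𝒢 be groups, p a prime, M a module over ℤ_p[G × 𝒢] with G finite, and H₁, H₂ ≤ G subgroups with ℤ_p[G/H₁] ≅ ℤ_p[G/H₂] as ℤ_p[G]-modules. Then the coinvariant modules M_{H₁} and M_{H₂} are isomorphic as ℤ_p[𝒢]-modules. -/
section aux

variable {R : Type*} [CommRing R] {G : Type*} [Group G] {M : Type*} [AddCommGroup M]
  [Module R M] (ρ : Representation R G M)

/-- The module of coinvariant relations for a subgroup. -/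
def Ncoinv (H : Subgroup G) : Submodule R M :=
  Submodule.span R {z : M | ∃ h ∈ H, ∃ m : M, z = ρ h m - m}

lemma mkQ_rho_inv_eq {H : Subgroup G} {g g' : G}
    (h : (g : G ⧸ H) = (g' : G ⧸ H)) (m : M) :
    (Ncoinv ρ H).mkQ (ρ g⁻¹ m) = (Ncoinv ρ H).mkQ (ρ g'⁻¹ m) := by
  have hk : g⁻¹ * g' ∈ H := QuotientGroup.eq.1 h
  have : ρ g'⁻¹ m = ρ (g⁻¹ * g')⁻¹ (ρ g⁻¹ m) := by
    rw [← Module.End.mul_apply, ← map_mul]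
    congr 1
    group
  rw [this, eq_comm, Submodule.mkQ_apply, Submodule.mkQ_apply, Submodule.Quotient.eq]
  exact Submodule.subset_span ⟨(g⁻¹ * g')⁻¹, inv_mem hk, ρ g⁻¹ m, rfl⟩

variable {H K : Subgroup G}

/-- The linear map `M → M ⧸ N_K` induced by a linear map `R[G/H] → R[G/K]`. -/
noncomputable def coF (φ : ((G ⧸ H) →₀ R) →ₗ[R] ((G ⧸ K) →₀ R)) : M →ₗ[R] M ⧸ Ncoinv ρ K :=
  (φ (Finsupp.single ((1 : G) : G ⧸ H) 1)).sum fun c a =>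
    a • ((Ncoinv ρ K).mkQ ∘ₗ (ρ (Quotient.out c)⁻¹))

lemma coF_apply (φ : ((G ⧸ H) →₀ R) →ₗ[R] ((G ⧸ K) →₀ R)) (m : M) :
    coF ρ φ m = (φ (Finsupp.single ((1 : G) : G ⧸ H) 1)).sum fun c a =>
      a • (Ncoinv ρ K).mkQ (ρ (Quotient.out c)⁻¹ m) := by
  simp [coF, Finsupp.sum, LinearMap.sum_apply]

/-- Key computation: how `coF` interacts with the `G`-action, assuming `φ` equivariant. -/
lemma coF_rho (φ : ((G ⧸ H) →₀ R) →ₗ[R] ((G ⧸ K) →₀ R))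
    (hφ : ∀ (g : G) (x : (G ⧸ H) →₀ R),
      φ (Finsupp.mapDomain (fun c => g • c) x) = Finsupp.mapDomain (fun c => g • c) (φ x))
    (g : G) (m : M) :
    coF ρ φ (ρ g m) = (φ (Finsupp.single ((g⁻¹ : G) : G ⧸ H) 1)).sum fun c a =>
      a • (Ncoinv ρ K).mkQ (ρ (Quotient.out c)⁻¹ m) := by
  have h1 : (Finsupp.single ((g⁻¹ : G) : G ⧸ H) (1 : R)) =
      Finsupp.mapDomain (fun c => g⁻¹ • c) (Finsupp.single ((1 : G) : G ⧸ H) 1) := by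
    rw [Finsupp.mapDomain_single]
    congr 1
    simp
  rw [h1, hφ]
  rw [Finsupp.sum_mapDomain_index (by intro b; simp) (by intro b a₁ a₂; rw [add_smul])]
  rw [coF_apply]
  apply Finsupp.sum_congr
  intro c _
  congr 1
  have h2 : ρ (Quotient.out c)⁻¹ (ρ g m) = ρ (g⁻¹ * Quotient.out c)⁻¹ m := by
    rw [← Module.End.mul_apply, ← map_mul]
    congr 1
    group
  rw [h2]
  apply mkQ_rho_inv_eq
  have hq : ((g⁻¹ * Quotient.out c : G) : G ⧸ K) = g⁻¹ • c := by
    have hs := MulAction.Quotient.smul_mk K g⁻¹ (Quotient.out c)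
    rw [smul_eq_mul] at hs
    rw [← hs, QuotientGroup.out_eq']
  rw [hq, QuotientGroup.out_eq']

lemma coF_rho_mem (φ : ((G ⧸ H) →₀ R) →ₗ[R] ((G ⧸ K) →₀ R))
    (hφ : ∀ (g : G) (x : (G ⧸ H) →₀ R),
      φ (Finsupp.mapDomain (fun c => g • c) x) = Finsupp.mapDomain (fun c => g • c) (φ x))
    {h : G} (hh : h ∈ H) (m : M) : coF ρ φ (ρ h m) = coF ρ φ m := by
  have hc : ((h⁻¹ : G) : G ⧸ H) = ((1 : G) : G ⧸ H) := by
    rw [QuotientGroup.eq]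
    simpa using hh
  rw [coF_rho ρ φ hφ, hc, coF_apply]

lemma Ncoinv_le_ker (φ : ((G ⧸ H) →₀ R) →ₗ[R] ((G ⧸ K) →₀ R))
    (hφ : ∀ (g : G) (x : (G ⧸ H) →₀ R),
      φ (Finsupp.mapDomain (fun c => g • c) x) = Finsupp.mapDomain (fun c => g • c) (φ x)) :
    Ncoinv ρ H ≤ LinearMap.ker (coF ρ φ) := by
  rw [Ncoinv, Submodule.span_le]
  rintro z ⟨h, hh, m, rfl⟩
  simp only [SetLike.mem_coe, LinearMap.mem_ker, map_sub, coF_rho_mem ρ φ hφ hh, sub_self]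

/-- The induced map on coinvariants. -/
noncomputable def coFbar (φ : ((G ⧸ H) →₀ R) →ₗ[R] ((G ⧸ K) →₀ R))
    (hφ : ∀ (g : G) (x : (G ⧸ H) →₀ R),
      φ (Finsupp.mapDomain (fun c => g • c) x) = Finsupp.mapDomain (fun c => g • c) (φ x)) :
    (M ⧸ Ncoinv ρ H) →ₗ[R] M ⧸ Ncoinv ρ K :=
  Submodule.liftQ _ (coF ρ φ) (Ncoinv_le_ker ρ φ hφ)

@[simp] lemma coFbar_mkQ (φ : ((G ⧸ H) →₀ R) →ₗ[R] ((G ⧸ K) →₀ R))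
    (hφ : ∀ (g : G) (x : (G ⧸ H) →₀ R),
      φ (Finsupp.mapDomain (fun c => g • c) x) = Finsupp.mapDomain (fun c => g • c) (φ x))
    (m : M) : coFbar ρ φ hφ ((Ncoinv ρ H).mkQ m) = coF ρ φ m := rfl

lemma coF_id (m : M) :
    coF ρ (LinearMap.id : ((G ⧸ H) →₀ R) →ₗ[R] ((G ⧸ H) →₀ R)) m = (Ncoinv ρ H).mkQ m := by
  rw [coF_apply]
  simp only [LinearMap.id_coe, id_eq]
  rw [Finsupp.sum_single_index (by simp)]
  rw [one_smul]
  have := mkQ_rho_inv_eq ρ (g := Quotient.out ((1 : G) : G ⧸ H)) (g' := (1 : G))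
    (by rw [QuotientGroup.out_eq']) m
  rw [this]
  simp

lemma coF_comp {L : Subgroup G} (φ : ((G ⧸ H) →₀ R) →ₗ[R] ((G ⧸ K) →₀ R))
    (hφ : ∀ (g : G) (x : (G ⧸ H) →₀ R),
      φ (Finsupp.mapDomain (fun c => g • c) x) = Finsupp.mapDomain (fun c => g • c) (φ x))
    (φ' : ((G ⧸ K) →₀ R) →ₗ[R] ((G ⧸ L) →₀ R))
    (hφ' : ∀ (g : G) (x : (G ⧸ K) →₀ R),
      φ' (Finsupp.mapDomain (fun c => g • c) x) = Finsupp.mapDomain (fun c => g • c) (φ' x))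
    (m : M) :
    coFbar ρ φ' hφ' (coF ρ φ m) = coF ρ (φ'.comp φ) m := by
  set u : (G ⧸ L) → M ⧸ Ncoinv ρ L := fun c => (Ncoinv ρ L).mkQ (ρ (Quotient.out c)⁻¹ m) with hu
  set S : ((G ⧸ L) →₀ R) →ₗ[R] M ⧸ Ncoinv ρ L := Finsupp.linearCombination R u with hS
  have hS_apply : ∀ t : (G ⧸ L) →₀ R, S t = t.sum fun c a => a • u c := fun t =>
    Finsupp.linearCombination_apply R t
  have step1 : ∀ c : G ⧸ K, coF ρ φ' (ρ (Quotient.out c)⁻¹ m) = S (φ' (Finsupp.single c 1)) := by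
    intro c
    rw [coF_rho ρ φ' hφ' _ m, hS_apply]
    congr 2
    rw [inv_inv, QuotientGroup.out_eq']
  rw [coF_apply, map_finsuppSum]
  have step2 : ((φ (Finsupp.single ((1 : G) : G ⧸ H) 1)).sum fun c a =>
        coFbar ρ φ' hφ' (a • (Ncoinv ρ K).mkQ (ρ (Quotient.out c)⁻¹ m))) =
      (φ (Finsupp.single ((1 : G) : G ⧸ H) 1)).sum fun c a => S (φ' (Finsupp.single c a)) := by
    apply Finsupp.sum_congr
    intro c _
    rw [map_smul, coFbar_mkQ, step1, ← map_smul, ← map_smul, Finsupp.smul_single, smul_eq_mul,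
      mul_one]
  rw [step2]
  have step3 : ((φ (Finsupp.single ((1 : G) : G ⧸ H) 1)).sum fun c a =>
      S (φ' (Finsupp.single c a))) = S (φ' (φ (Finsupp.single ((1 : G) : G ⧸ H) 1))) := by
    rw [← Finsupp.sum_single (φ (Finsupp.single ((1 : G) : G ⧸ H) 1)), map_finsuppSum,
      map_finsuppSum]
    simp only [Finsupp.sum_single]
  rw [step3, coF_apply, ← hS_apply]
  rfl

end aux

/-- Let `G` (finite) and `𝒢` be groups, `p` a prime, and `M` a `ℤ_p`-module with commuting
actions `ρ` of `G` and `τ` of `𝒢` (i.e. a `ℤ_p[G × 𝒢]`-module). If `H₁, H₂ ≤ G` are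
subgroups with `ℤ_p[G/H₁] ≅ ℤ_p[G/H₂]` as `ℤ_p[G]`-modules, then the coinvariant modules
`M_{H₁}` and `M_{H₂}` are isomorphic as `ℤ_p[𝒢]`-modules, i.e. there is a `ℤ_p`-linear
equivalence compatible with the induced `𝒢`-actions. -/
theorem coinvariants_iso_of_perm_iso (G 𝒢 : Type*) [Group G] [Finite G] [Group 𝒢]
    (p : ℕ) [Fact p.Prime] (M : Type*) [AddCommGroup M] [Module ℤ_[p] M]
    (ρ : Representation ℤ_[p] G M) (τ : Representation ℤ_[p] 𝒢 M)
    (hcomm : ∀ (g : G) (c : 𝒢) (m : M), ρ g (τ c m) = τ c (ρ g m))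
    (H₁ H₂ : Subgroup G)
    (hiso : ∃ e : ((G ⧸ H₁) →₀ ℤ_[p]) ≃ₗ[ℤ_[p]] ((G ⧸ H₂) →₀ ℤ_[p]),
      ∀ (g : G) (x : (G ⧸ H₁) →₀ ℤ_[p]),
        e (Finsupp.mapDomain (fun c => g • c) x) = Finsupp.mapDomain (fun c => g • c) (e x))
    (N₁ N₂ : Submodule ℤ_[p] M)
    (hN₁ : N₁ = Submodule.span ℤ_[p] {z : M | ∃ h ∈ H₁, ∃ m : M, z = ρ h m - m})
    (hN₂ : N₂ = Submodule.span ℤ_[p] {z : M | ∃ h ∈ H₂, ∃ m : M, z = ρ h m - m}) :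
    ∃ e : (M ⧸ N₁) ≃ₗ[ℤ_[p]] (M ⧸ N₂),
      ∀ (c : 𝒢) (m m' : M), e (N₁.mkQ m) = N₂.mkQ m' →
        e (N₁.mkQ (τ c m)) = N₂.mkQ (τ c m') := by
  obtain ⟨e, he⟩ := hiso
  have hN₁' : N₁ = Ncoinv ρ H₁ := hN₁
  have hN₂' : N₂ = Ncoinv ρ H₂ := hN₂
  subst hN₁' hN₂'
  have he' : ∀ (g : G) (x : (G ⧸ H₂) →₀ ℤ_[p]),
      e.symm (Finsupp.mapDomain (fun c => g • c) x)
        = Finsupp.mapDomain (fun c => g • c) (e.symm x) := by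
    intro g x
    have h0 := he g (e.symm x)
    rw [e.apply_symm_apply] at h0
    apply e.injective
    rw [e.apply_symm_apply, h0]
  -- forward and backward maps
  set F : (M ⧸ Ncoinv ρ H₁) →ₗ[ℤ_[p]] M ⧸ Ncoinv ρ H₂ := coFbar ρ e.toLinearMap he with hF
  set Fi : (M ⧸ Ncoinv ρ H₂) →ₗ[ℤ_[p]] M ⧸ Ncoinv ρ H₁ := coFbar ρ e.symm.toLinearMap he' with hFi
  have hid1 : (e.symm.toLinearMap.comp e.toLinearMap)
      = (LinearMap.id : ((G ⧸ H₁) →₀ ℤ_[p]) →ₗ[ℤ_[p]] _) := by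
    ext x : 1; simp
  have hid2 : (e.toLinearMap.comp e.symm.toLinearMap)
      = (LinearMap.id : ((G ⧸ H₂) →₀ ℤ_[p]) →ₗ[ℤ_[p]] _) := by
    ext x : 1; simp
  have hFiF0 : ∀ m : M, Fi (F ((Ncoinv ρ H₁).mkQ m)) = (Ncoinv ρ H₁).mkQ m := by
    intro m
    rw [hF, hFi, coFbar_mkQ, coF_comp ρ e.toLinearMap he e.symm.toLinearMap he' m,
      hid1, coF_id]
  have hFiF : Fi.comp F = LinearMap.id := by
    apply Submodule.linearMap_qext
    apply LinearMap.ext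
    intro m
    simpa using hFiF0 m
  have hFFi0 : ∀ m : M, F (Fi ((Ncoinv ρ H₂).mkQ m)) = (Ncoinv ρ H₂).mkQ m := by
    intro m
    rw [hF, hFi, coFbar_mkQ, coF_comp ρ e.symm.toLinearMap he' e.toLinearMap he m,
      hid2, coF_id]
  have hFFi : F.comp Fi = LinearMap.id := by
    apply Submodule.linearMap_qext
    apply LinearMap.ext
    intro m
    simpa using hFFi0 m
  refine ⟨LinearEquiv.ofLinear F Fi hFFi hFiF, ?_⟩
  intro c m m' hmm'
  -- induced action of `τ c` on the quotients
  have hker : Ncoinv ρ H₂ ≤ LinearMap.ker ((Ncoinv ρ H₂).mkQ ∘ₗ (τ c)) := by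
    rw [Ncoinv, Submodule.span_le]
    rintro z ⟨h, hh, m₀, rfl⟩
    simp only [SetLike.mem_coe, LinearMap.mem_ker, LinearMap.comp_apply, map_sub,
      Submodule.mkQ_apply]
    rw [← Submodule.Quotient.mk_sub, Submodule.Quotient.mk_eq_zero]
    rw [← hcomm]
    exact Submodule.subset_span ⟨h, hh, τ c m₀, rfl⟩
  set T : (M ⧸ Ncoinv ρ H₂) →ₗ[ℤ_[p]] M ⧸ Ncoinv ρ H₂ :=
    Submodule.liftQ _ ((Ncoinv ρ H₂).mkQ ∘ₗ (τ c)) hker with hT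
  have hTmk : ∀ x : M, T ((Ncoinv ρ H₂).mkQ x) = (Ncoinv ρ H₂).mkQ (τ c x) := fun x => rfl
  have key : ∀ x : M, coF ρ e.toLinearMap (τ c x) = T (coF ρ e.toLinearMap x) := by
    intro x
    rw [coF_apply, coF_apply, map_finsuppSum]
    apply Finsupp.sum_congr
    intro c' _
    rw [map_smul, hTmk]
    congr 1
    rw [hcomm]
  have hOF : ∀ y, (LinearEquiv.ofLinear F Fi hFFi hFiF) y = F y := fun y => by
    rw [LinearEquiv.ofLinear_apply]
  rw [hOF] at hmm' ⊢
  rw [hF, coFbar_mkQ, key, ← coFbar_mkQ ρ e.toLinearMap he, ← hF, hmm', hTmk]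
end

section
/- Let M be a number field, 𝔩 a degree-one prime of M above a rational prime l, unramified in M/ℚ, and let ε be a unit of the ring of integers of M(μ_l), where μ_l are the l-th roots of unity. Then the norm N_{M(μ_l)/M}(ε) is congruent to 1 modulo 𝔩. -/
/-!
For a prime `𝔏` of `L = M(μ_l)` above `𝔩` and a primitive root `ζ`, `ζ - 1 ∈ 𝔏` (Frobenius
modulo `𝔏`), and `l = z * (ζ - 1) ^ (l - 1)`, so `l ∈ 𝔏 ^ (l - 1)`. As `l` is unramified at `𝔩`,
the ramification index of `𝔩` in `L` is at least `l - 1 ≥ [L : M]`, so `𝔩` is totally ramified: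
the inertia group of `𝔏` is all of `Gal(L/M)`, which has order `l - 1`, and `𝓞 L ⧸ 𝔏 ≅ 𝓞 M ⧸ 𝔩`
has `l` elements. Hence `N(ε) = ∏ σ ε ≡ ε ^ (l - 1) ≡ 1` modulo `𝔏`, and `𝔏 ∩ 𝓞 M = 𝔩`.
-/

open NumberField Ideal

namespace IsPrimitiveRoot

variable {S : Type*} [CommRing S] {p : ℕ} [hp : Fact p.Prime] {ζ : S} {P : Ideal S}

theorem sub_one_mem_of_natCast_mem [P.IsPrime] (hζ : IsPrimitiveRoot ζ p) (hpP : (p : S) ∈ P) :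
    ζ - 1 ∈ P := by
  have : CharP (S ⧸ P) p := (CharP.charP_iff_prime_eq_zero hp.out).mpr <| by
    rwa [← map_natCast (Ideal.Quotient.mk P), Ideal.Quotient.eq_zero_iff_mem]
  rw [← Ideal.Quotient.eq_zero_iff_mem, ← pow_eq_zero_iff hp.out.ne_zero, map_sub, map_one,
    sub_pow_char, ← map_pow, hζ.pow_eq_one, map_one, one_pow, sub_self]

theorem natCast_mem_pow_of_natCast_mem [IsDomain S] [P.IsPrime] (hζ : IsPrimitiveRoot ζ p)
    (hpP : (p : S) ∈ P) : (p : S) ∈ P ^ (p - 1) := by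
  obtain ⟨z, -, hz⟩ := hζ.self_sub_one_pow_dvd_order (Nat.sub_lt hp.out.pos one_pos)
  rw [hz]
  exact (P ^ (p - 1)).mul_mem_left z (Ideal.pow_mem_pow (hζ.sub_one_mem_of_natCast_mem hpP) _)

end IsPrimitiveRoot

theorem Ideal.IsDedekindDomain.le_ramificationIdx'_of_map_le_pow {R S : Type*} [CommRing R]
    [CommRing S] [Algebra R S] [IsDedekindDomain S] {p : Ideal R} {P : Ideal S} [hP : P.IsPrime]
    (hp : map (algebraMap R S) p ≠ ⊥) {n : ℕ} (h : map (algebraMap R S) p ≤ P ^ n) :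
    n ≤ ramificationIdx' p P := by
  rw [IsDedekindDomain.ramificationIdx'_eq_multiplicity hp hP]
  exact (FiniteMultiplicity.of_not_isUnit (Ideal.isUnit_iff.not.mpr hP.ne_top) hp)
    |>.le_multiplicity_of_pow_dvd (Ideal.dvd_iff_le.mpr h)

theorem IsPrimitiveRoot.pred_le_ramificationIdx' {S : Type*} [CommRing S] [IsDedekindDomain S]
    [CharZero S] {p : ℕ} [hp : Fact p.Prime] {ζ : S} (hζ : IsPrimitiveRoot ζ p) {P : Ideal S}
    [P.IsPrime] (hpP : (p : S) ∈ P) : p - 1 ≤ ramificationIdx' (span {(p : ℤ)}) P := by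
  have hmap : map (algebraMap ℤ S) (span {(p : ℤ)}) = span {(p : S)} := by
    rw [map_span, Set.image_singleton, map_natCast]
  refine IsDedekindDomain.le_ramificationIdx'_of_map_le_pow ?_ ?_
  · rw [hmap, Ne, span_singleton_eq_bot]
    exact Nat.cast_ne_zero.mpr hp.out.ne_zero
  · rw [hmap, span_singleton_le_iff_mem]
    exact hζ.natCast_mem_pow_of_natCast_mem hpP

section Galois

variable {R S G : Type*} [CommRing R] [CommRing S] [Algebra R S] [IsDomain R] [IsDomain S]
  [Module.Finite R S] [Module.Flat R S] [Group G] [Finite G] [MulSemiringAction G S]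
  [IsGaloisGroup G R S] (p : Ideal R) [p.IsPrime]

variable (G) in
include G in
theorem Ideal.ramificationIdxIn_le_card : p.ramificationIdxIn S ≤ Nat.card G := by
  refine Nat.le_of_dvd Nat.card_pos ⟨(primesOver p S).ncard * p.inertiaDegIn S, ?_⟩
  rw [← ncard_primesOver_mul_ramificationIdxIn_mul_inertiaDegIn p S G]
  ring

variable (G) in
include G in
theorem Ideal.inertiaDegIn_eq_one_of_ramificationIdxIn_eq_card
    (h : p.ramificationIdxIn S = Nat.card G) : p.inertiaDegIn S = 1 := by
  have key := ncard_primesOver_mul_ramificationIdxIn_mul_inertiaDegIn p S G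
  rw [← h, mul_left_comm, Nat.mul_eq_left (h ▸ Nat.card_pos.ne')] at key
  exact Nat.eq_one_of_mul_eq_one_left key

theorem Ideal.inertia_eq_top_of_ramificationIdxIn_eq_card [PerfectField p.ResidueField]
    (P : Ideal S) [P.IsPrime] [P.LiesOver p] (h : p.ramificationIdxIn S = Nat.card G) :
    P.inertia G = ⊤ :=
  Subgroup.eq_top_of_card_eq _ (by rw [card_inertia_eq_ramificationIdxIn p P, h])

end Galois

theorem Ideal.prod_smul_sub_pow_mem_of_inertia_eq_top {S G : Type*} [CommRing S] [Group G]
    [Fintype G] [MulSemiringAction G S] {P : Ideal S} (hP : P.inertia G = ⊤) (x : S) :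
    ∏ σ : G, σ • x - x ^ Nat.card G ∈ P := by
  have hσ (σ : G) : Ideal.Quotient.mk P (σ • x) = Ideal.Quotient.mk P x :=
    Ideal.Quotient.eq.mpr ((hP ▸ Subgroup.mem_top σ : σ ∈ P.inertia G) x)
  rw [← Ideal.Quotient.eq, map_prod, map_pow, Finset.prod_congr rfl fun σ _ ↦ hσ σ,
    Finset.prod_const, Finset.card_univ, Fintype.card_eq_nat_card]

theorem Ideal.pow_card_quotient_sub_one_sub_one_mem {S : Type*} [CommRing S] (P : Ideal S)
    [P.IsMaximal] [Finite (S ⧸ P)] (u : Sˣ) : (u : S) ^ (Nat.card (S ⧸ P) - 1) - 1 ∈ P := by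
  let := Ideal.Quotient.field P
  rw [← Ideal.Quotient.eq_zero_iff_mem, map_sub, map_pow, map_one, sub_eq_zero, ← Nat.card_units]
  exact congrArg Units.val (pow_card_eq_one' (x := Units.map (Ideal.Quotient.mk P : S →* S ⧸ P) u))

theorem NumberField.RingOfIntegers.algebraMap_norm_eq_prod_smul {K L : Type*} [Field K]
    [Field L] [Algebra K L] [FiniteDimensional K L] [IsGalois K L] (x : 𝓞 L) :
    algebraMap (𝓞 K) (𝓞 L) (RingOfIntegers.norm K x) = ∏ σ : Gal(L/K), σ • x := by
  ext
  rw [RingOfIntegers.coe_algebraMap_norm, Algebra.norm_eq_prod_automorphisms]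
  simp only [map_prod]
  rfl

theorem IsPrimitiveRoot.pred_le_ramificationIdxIn {M L : Type*} [Field M] [NumberField M]
    [Field L] [NumberField L] [Algebra M L] [IsGalois M L] {l : ℕ} [hl : Fact l.Prime] {ζ : L}
    (hζ : IsPrimitiveRoot ζ l) {𝔩 : Ideal (𝓞 M)} [𝔩.IsPrime] (hl𝔩 : (l : 𝓞 M) ∈ 𝔩)
    (hunram : ramificationIdx' (span {(l : ℤ)}) 𝔩 = 1) : l - 1 ≤ 𝔩.ramificationIdxIn (𝓞 L) := by
  have : 𝔩.LiesOver (span {(l : ℤ)}) :=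
    (liesOver_span_iff (IsPrime.ne_top ‹_›) (Nat.prime_iff_prime_int.mp hl.out)).mpr
      (by simpa using hl𝔩)
  have h𝔩 : 𝔩 ≠ ⊥ :=
    ne_bot_of_liesOver_of_ne_bot (show span {(l : ℤ)} ≠ ⊥ by simpa using hl.out.ne_zero) 𝔩
  have : 𝔩.IsMaximal := IsPrime.isMaximal ‹_› h𝔩
  obtain ⟨𝔏, _, _⟩ := exists_maximal_ideal_liesOver_of_isIntegral (S := 𝓞 L) 𝔩
  have hl𝔏 : (l : 𝓞 L) ∈ 𝔏 := by
    rw [← map_natCast (algebraMap (𝓞 M) (𝓞 L)), ← mem_comap, ← under_def, ← over_def 𝔏 𝔩]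
    exact hl𝔩
  have htower := ramificationIdx'_algebra_tower' (span {(l : ℤ)}) 𝔩 𝔏
  rw [hunram, one_mul] at htower
  rw [ramificationIdxIn_eq_ramificationIdx 𝔩 𝔏 Gal(L/M),
    ← ramificationIdx'_eq_ramificationIdx 𝔩 𝔏 h𝔩, ← htower]
  exact hζ.toInteger_isPrimitiveRoot.pred_le_ramificationIdx' hl𝔏

theorem NumberField.card_quotient_eq_absNorm_of_inertiaDegIn_eq_one {M L : Type*} [Field M]
    [NumberField M] [Field L] [NumberField L] [Algebra M L] [IsGalois M L] {𝔩 : Ideal (𝓞 M)}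
    [𝔩.IsMaximal] (𝔏 : Ideal (𝓞 L)) [𝔏.IsMaximal] [𝔏.LiesOver 𝔩]
    (h : 𝔩.inertiaDegIn (𝓞 L) = 1) : Nat.card (𝓞 L ⧸ 𝔏) = absNorm 𝔩 := by
  rw [← Submodule.cardQuot_apply, ← absNorm_apply,
    absNorm_eq_pow_inertiaDeg'_of_liesOver 𝔏 𝔩 inferInstance (NeZero.ne 𝔩),
    inertiaDeg'_eq_inertiaDeg, ← inertiaDegIn_eq_inertiaDeg 𝔩 𝔏 Gal(L/M), h, pow_one]

theorem IsCyclotomicExtension.card_gal_le_pred {M L : Type*} [Field M] [Field L] [Algebra M L]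
    {l : ℕ} [hl : Fact l.Prime] [IsCyclotomicExtension {l} M L] : Nat.card Gal(L/M) ≤ l - 1 := by
  obtain ⟨ζ, hζ⟩ := IsCyclotomicExtension.exists_isPrimitiveRoot M L (Set.mem_singleton l)
    hl.out.ne_zero
  calc Nat.card Gal(L/M) ≤ Nat.card (ZMod l)ˣ :=
        Nat.card_le_card_of_injective _ (hζ.autToPow_injective M)
    _ = l - 1 := by rw [Nat.card_units, Nat.card_zmod]

/-- Let `M` be a number field, `l` a prime number, `𝔩` a degree-one prime of `M` above `l`
which is unramified in `M/ℚ`, and `L = M(μ_l)` the `l`-th cyclotomic extension of `M`.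
Then for every unit `ε` of the ring of integers of `L`, the norm `N_{L/M}(ε)` is congruent
to `1` modulo `𝔩`. -/
theorem norm_unit_congr_one (M L : Type*) [Field M] [NumberField M] [Field L]
    [NumberField L] [Algebra M L] (l : ℕ) (hl : l.Prime)
    [IsCyclotomicExtension {l} M L]
    (𝔩 : Ideal (𝓞 M)) (hprime : 𝔩.IsPrime) (hl𝔩 : (l : 𝓞 M) ∈ 𝔩)
    (hdeg : Ideal.absNorm 𝔩 = l)
    (hunram : Ideal.ramificationIdx' (Ideal.span {(l : ℤ)}) 𝔩 = 1)
    (ε : (𝓞 L)ˣ) :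
    RingOfIntegers.norm M (ε : 𝓞 L) - 1 ∈ 𝔩 := by
  have : Fact l.Prime := ⟨hl⟩
  have := IsCyclotomicExtension.isGalois {l} M L
  obtain ⟨ζ, hζ⟩ := IsCyclotomicExtension.exists_isPrimitiveRoot M L (Set.mem_singleton l)
    hl.ne_zero
  have hle := hζ.pred_le_ramificationIdxIn hl𝔩 hunram
  have hcard : Nat.card Gal(L/M) = l - 1 := IsCyclotomicExtension.card_gal_le_pred.antisymm
    (hle.trans (ramificationIdxIn_le_card Gal(L/M) 𝔩))
  have he : 𝔩.ramificationIdxIn (𝓞 L) = Nat.card Gal(L/M) :=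
    (ramificationIdxIn_le_card Gal(L/M) 𝔩).antisymm (hcard ▸ hle)
  have : 𝔩.IsMaximal := hprime.isMaximal <|
    (Submodule.ne_bot_iff 𝔩).mpr ⟨_, hl𝔩, Nat.cast_ne_zero.mpr hl.ne_zero⟩
  obtain ⟨𝔏, _, _⟩ := exists_maximal_ideal_liesOver_of_isIntegral (S := 𝓞 L) 𝔩
  have hfermat := pow_card_quotient_sub_one_sub_one_mem 𝔏 ε
  rw [card_quotient_eq_absNorm_of_inertiaDegIn_eq_one 𝔏
    (inertiaDegIn_eq_one_of_ramificationIdxIn_eq_card Gal(L/M) 𝔩 he), hdeg, ← hcard] at hfermat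
  have hinertia := prod_smul_sub_pow_mem_of_inertia_eq_top
    (inertia_eq_top_of_ramificationIdxIn_eq_card 𝔩 𝔏 he) (ε : 𝓞 L)
  rw [over_def 𝔏 𝔩, under_def, mem_comap, map_sub, map_one,
    RingOfIntegers.algebraMap_norm_eq_prod_smul]
  simpa only [sub_add_sub_cancel] using add_mem hinertia hfermat
end

section
/- Let G be a finite group and H₁, H₂ ≤ G subgroups such that for every conjugacy class C of G, |C ∩ H₁| = |C ∩ H₂| (Gassmann equivalence). Let σ ∈ G and let D ≤ G be any subgroup containing conjugates of H₁ and H₂ with finite index. Then for any prime p not dividing |G| with ℚ_p[G/H₁] ≅ ℚ_p[G/H₂] as ℚ_p[G]-modules, the number of ⟨σ⟩-orbits on G/H₁ of each given size equals the number of ⟨σ⟩-orbits on G/H₂ of that size. -/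
/-!
Since `ℚ_p` has characteristic zero, the trace of `g` on the permutation module `ℚ_p[X]` is
the number of fixed points of `g` on `X`, so isomorphic permutation modules have the same
fixed-point counts for every `σ ^ n`. The fixed points of `σ ^ n` are the union of the
`⟨σ⟩`-orbits whose size divides `n`, so their number is `∑_{d ∣ n} d · #{orbits of size d}`,
and these sums determine the orbit counts by strong induction on `d`.
-/

open MulAction Subgroup

section Trace

variable {K : Type*} [CommRing K] {ι : Type*} [Finite ι]

theorem Finsupp.trace_lmapDomain (f : ι → ι) :
    LinearMap.trace K (ι →₀ K) (Finsupp.lmapDomain K K f) = Nat.card {i // f i = i} := by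
  classical
  have := Fintype.ofFinite ι
  rw [LinearMap.trace_eq_matrix_trace K Finsupp.basisSingleOne, Matrix.trace,
    Nat.card_eq_fintype_card, Fintype.card_subtype, ← Finset.sum_boole]
  refine Finset.sum_congr rfl fun i _ => ?_
  simp [LinearMap.toMatrix_apply, Finsupp.single_apply, eq_comm]

theorem Finsupp.card_fixedPoints_eq_of_intertwines_mapDomain [CharZero K] {κ : Type*} [Finite κ]
    {f : ι → ι} {f' : κ → κ} (e : (ι →₀ K) ≃ₗ[K] (κ →₀ K))
    (he : ∀ x, e (Finsupp.mapDomain f x) = Finsupp.mapDomain f' (e x)) :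
    Nat.card {i // f i = i} = Nat.card {i // f' i = i} := by
  have hconj : e.conj (Finsupp.lmapDomain K K f) = Finsupp.lmapDomain K K f' := by
    refine LinearMap.ext fun x => ?_
    simp [LinearEquiv.conj_apply, he]
  have htrace := congrArg (LinearMap.trace K _) hconj
  rw [LinearMap.trace_conj', Finsupp.trace_lmapDomain, Finsupp.trace_lmapDomain] at htrace
  exact_mod_cast htrace

end Trace

section OrbitCount

variable {M : Type*} [Group M] (σ : M) (X : Type*) [MulAction M X]

noncomputable def numOrbitsOfCard (d : ℕ) : ℕ :=
  Nat.card {ω : orbitRel.Quotient (zpowers σ) X // Nat.card ω.orbit = d}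

variable {X} [Finite X]

theorem pow_smul_eq_self_iff_card_orbit_dvd (n : ℕ) (x : X) :
    σ ^ n • x = x ↔ Nat.card (orbit (zpowers σ) x) ∣ n := by
  have : Fintype (orbit (zpowers σ) x) := Fintype.ofFinite _
  rw [pow_smul_eq_iff_minimalPeriod_dvd, minimalPeriod_eq_card, Nat.card_eq_fintype_card]

variable (X)

theorem numOrbitsOfCard_zero : numOrbitsOfCard σ X 0 = 0 := by
  refine Nat.card_eq_zero.2 (Or.inl ⟨fun ⟨ω, hω⟩ => ?_⟩)
  have : Nonempty ω.orbit := (orbitRel.Quotient.nonempty_orbit ω).to_subtype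
  exact Nat.card_pos.ne' hω

theorem card_card_orbit_eq_mul_numOrbitsOfCard (d : ℕ) :
    Nat.card {x : X // Nat.card (orbit (zpowers σ) x) = d} = d * numOrbitsOfCard σ X d := by
  have := Fintype.ofFinite (orbitRel.Quotient (zpowers σ) X)
  let π : X → orbitRel.Quotient (zpowers σ) X := Quotient.mk''
  have card_fiber (ω : orbitRel.Quotient (zpowers σ) X) :
      Nat.card {x // π x = ω} = Nat.card ω.orbit :=
    Nat.card_congr (Equiv.subtypeEquivRight fun x => orbitRel.Quotient.mem_orbit.symm)
  rw [← Nat.card_congr (Equiv.sigmaSubtypeFiberEquivSubtype π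
    (p := fun x => Nat.card (orbit (zpowers σ) x) = d) (q := fun ω => Nat.card ω.orbit = d)
    fun x => Iff.rfl), Nat.card_sigma]
  calc ∑ ω : {ω : orbitRel.Quotient (zpowers σ) X // Nat.card ω.orbit = d},
        Nat.card {x // π x = ω}
      = ∑ _ω : {ω : orbitRel.Quotient (zpowers σ) X // Nat.card ω.orbit = d}, d :=
        Finset.sum_congr rfl fun ω _ => (card_fiber ω).trans ω.2
    _ = d * numOrbitsOfCard σ X d := by
        rw [Finset.sum_const, Finset.card_univ, smul_eq_mul, mul_comm, Fintype.card_eq_nat_card]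
        rfl

theorem card_pow_smul_eq_self_eq_sum_divisors {n : ℕ} (hn : n ≠ 0) :
    Nat.card {x : X // σ ^ n • x = x} = ∑ d ∈ n.divisors, d * numOrbitsOfCard σ X d := by
  let f : X → ℕ := fun x => Nat.card (orbit (zpowers σ) x)
  have hfix : ∀ x, σ ^ n • x = x ↔ f x ∈ n.divisors := fun x => by
    rw [pow_smul_eq_self_iff_card_orbit_dvd, Nat.mem_divisors, and_iff_left hn]
  rw [← Nat.card_congr (Equiv.sigmaSubtypeFiberEquivSubtype f hfix), Nat.card_sigma,
    ← Finset.sum_coe_sort n.divisors]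
  exact Finset.sum_congr rfl fun d _ => card_card_orbit_eq_mul_numOrbitsOfCard σ X d

variable {X}

theorem numOrbitsOfCard_eq_of_card_pow_smul_eq_self {Y : Type*} [MulAction M Y] [Finite Y]
    (h : ∀ n, Nat.card {x : X // σ ^ n • x = x} = Nat.card {y : Y // σ ^ n • y = y}) (d : ℕ) :
    numOrbitsOfCard σ X d = numOrbitsOfCard σ Y d := by
  induction d using Nat.strong_induction_on with
  | _ d ih =>
  rcases eq_or_ne d 0 with rfl | hd
  · rw [numOrbitsOfCard_zero, numOrbitsOfCard_zero]
  have hsum := h d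
  rw [card_pow_smul_eq_self_eq_sum_divisors σ X hd,
    card_pow_smul_eq_self_eq_sum_divisors σ Y hd,
    ← Nat.cons_self_properDivisors hd, Finset.sum_cons, Finset.sum_cons,
    Finset.sum_congr rfl fun e he => by rw [ih e (Nat.mem_properDivisors.1 he).2]] at hsum
  exact Nat.eq_of_mul_eq_mul_left (Nat.pos_of_ne_zero hd) (Nat.add_right_cancel hsum)

end OrbitCount

theorem orbit_counts_eq_general (G : Type*) [Group G] [Finite G] (H₁ H₂ : Subgroup G)
    (σ : G)
    (p : ℕ) [Fact p.Prime]
    (hiso : ∃ e : ((G ⧸ H₁) →₀ ℚ_[p]) ≃ₗ[ℚ_[p]] ((G ⧸ H₂) →₀ ℚ_[p]),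
      ∀ (g : G) (x : (G ⧸ H₁) →₀ ℚ_[p]),
        e (Finsupp.mapDomain (fun c => g • c) x) = Finsupp.mapDomain (fun c => g • c) (e x)) :
    ∀ n : ℕ,
      Nat.card {ω : MulAction.orbitRel.Quotient (Subgroup.zpowers σ) (G ⧸ H₁) //
          Nat.card ω.orbit = n} =
        Nat.card {ω : MulAction.orbitRel.Quotient (Subgroup.zpowers σ) (G ⧸ H₂) //
          Nat.card ω.orbit = n} := by
  obtain ⟨e, he⟩ := hiso
  exact numOrbitsOfCard_eq_of_card_pow_smul_eq_self σ fun n =>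
    Finsupp.card_fixedPoints_eq_of_intertwines_mapDomain e (he (σ ^ n))

/-- Let `G` be a finite group and `H₁, H₂ ≤ G` Gassmann-equivalent subgroups (every
conjugacy class meets `H₁` and `H₂` in the same number of elements). Let `σ ∈ G` and let
`D ≤ G` be a subgroup containing conjugates of `H₁` and `H₂` with finite index. Then for
any prime `p` not dividing `|G|` with `ℚ_p[G/H₁] ≅ ℚ_p[G/H₂]` as `ℚ_p[G]`-modules, for
every `n` the number of `⟨σ⟩`-orbits of size `n` on `G/H₁` equals the number of
`⟨σ⟩`-orbits of size `n` on `G/H₂`. -/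
theorem orbit_counts_eq (G : Type*) [Group G] [Finite G] (H₁ H₂ : Subgroup G)
    (hGassmann : ∀ g : G, Nat.card {x : G // x ∈ H₁ ∧ IsConj g x} =
      Nat.card {x : G // x ∈ H₂ ∧ IsConj g x})
    (σ : G) (D : Subgroup G)
    (hD₁ : ∃ g₁ : G, Subgroup.map (MulAut.conj g₁).toMonoidHom H₁ ≤ D ∧
      (Subgroup.map (MulAut.conj g₁).toMonoidHom H₁).relIndex D ≠ 0)
    (hD₂ : ∃ g₂ : G, Subgroup.map (MulAut.conj g₂).toMonoidHom H₂ ≤ D ∧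
      (Subgroup.map (MulAut.conj g₂).toMonoidHom H₂).relIndex D ≠ 0)
    (p : ℕ) [Fact p.Prime] (hp : ¬ p ∣ Nat.card G)
    (hiso : ∃ e : ((G ⧸ H₁) →₀ ℚ_[p]) ≃ₗ[ℚ_[p]] ((G ⧸ H₂) →₀ ℚ_[p]),
      ∀ (g : G) (x : (G ⧸ H₁) →₀ ℚ_[p]),
        e (Finsupp.mapDomain (fun c => g • c) x) = Finsupp.mapDomain (fun c => g • c) (e x)) :
    ∀ n : ℕ,
      Nat.card {ω : MulAction.orbitRel.Quotient (Subgroup.zpowers σ) (G ⧸ H₁) //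
          Nat.card ω.orbit = n} =
        Nat.card {ω : MulAction.orbitRel.Quotient (Subgroup.zpowers σ) (G ⧸ H₂) //
          Nat.card ω.orbit = n} :=
  orbit_counts_eq_general G H₁ H₂ σ p hiso
end

section
/- The polynomials f₁(X) = X⁷ - 7X + 3 and f₂(X) = X⁷ + 14X⁴ - 42X² - 21X + 9 are both irreducible over ℚ. -/
open Polynomial

lemma eis7 (f : ℤ[X]) (hm : f.Monic) (hd : f.natDegree = 7)
    (hc : ∀ n < 7, (7:ℤ) ∣ f.coeff n) (h0 : ¬ (49:ℤ) ∣ f.coeff 0) : Irreducible f := by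
  have hp : Prime (7:ℤ) := by norm_num
  have hdeg : f.degree = 7 := by
    rw [degree_eq_natDegree hm.ne_zero, hd]; rfl
  apply irreducible_of_eisenstein_criterion
      ((Ideal.span_singleton_prime (by norm_num : (7:ℤ) ≠ 0)).mpr hp)
      ?_ ?_ ?_ ?_ hm.isPrimitive
  · rw [hm.leadingCoeff, Ideal.mem_span_singleton]
    norm_num
  · intro n hn
    rw [Ideal.mem_span_singleton]
    exact hc n (by exact_mod_cast hdeg ▸ hn)
  · rw [hdeg]; norm_num
  · rw [Ideal.span_singleton_pow, Ideal.mem_span_singleton]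
    norm_num
    exact h0

lemma shift_irred (f g : ℤ[X]) (c : ℤ) (h : (algEquivAevalXAddC c) f = g)
    (hg : Irreducible g) : Irreducible f :=
  (MulEquiv.irreducible_iff (algEquivAevalXAddC c).toMulEquiv).mp (h ▸ hg)

lemma g1_irred : Irreducible ((X:ℤ[X])^7 - 21*X^6 + 189*X^5 - 945*X^4 + 2835*X^3
    - 5103*X^2 + 5096*X - 2163) := by
  apply eis7
  · monicity!
  · compute_degree!
  · intro n hn
    interval_cases n <;> simp [coeff_X_pow, coeff_X] <;> norm_num
  · simp [coeff_X_pow]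

lemma f1Z_irred : Irreducible ((X:ℤ[X])^7 - 7*X + 3) := by
  apply shift_irred _ _ (-3) _ g1_irred
  simp [algEquivAevalXAddC, map_ofNat, sub_eq_add_neg]
  ring

lemma f1_irred : Irreducible ((X : ℚ[X]) ^ 7 - 7 * X + 3) := by
  have hm : ((X:ℤ[X])^7 - 7*X + 3).Monic := by monicity!
  have h := (hm.irreducible_iff_irreducible_map_fraction_map (K := ℚ)).mp f1Z_irred
  have he : ((X:ℤ[X])^7 - 7*X + 3).map (algebraMap ℤ ℚ) = (X : ℚ[X]) ^ 7 - 7 * X + 3 := by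
    simp
  rwa [he] at h

lemma g2_irred : Irreducible ((X:ℤ[X])^7 - 14*X^6 + 84*X^5 - 266*X^4 + 448*X^3
    - 378*X^2 + 147*X - 21) := by
  apply eis7
  · monicity!
  · compute_degree!
  · intro n hn
    interval_cases n <;> simp [coeff_X_pow, coeff_X] <;> norm_num
  · simp [coeff_X_pow]

lemma f2Z_irred : Irreducible ((X:ℤ[X])^7 + 14*X^4 - 42*X^2 - 21*X + 9) := by
  apply shift_irred _ _ (-2) _ g2_irred
  simp [algEquivAevalXAddC, map_ofNat, sub_eq_add_neg]
  ring

lemma f2_irred : Irreducible ((X : ℚ[X])^7 + 14*X^4 - 42*X^2 - 21*X + 9) := by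
  have hm : ((X:ℤ[X])^7 + 14*X^4 - 42*X^2 - 21*X + 9).Monic := by monicity!
  have h := (hm.irreducible_iff_irreducible_map_fraction_map (K := ℚ)).mp f2Z_irred
  have he : ((X:ℤ[X])^7 + 14*X^4 - 42*X^2 - 21*X + 9).map (algebraMap ℤ ℚ)
      = (X : ℚ[X])^7 + 14*X^4 - 42*X^2 - 21*X + 9 := by
    simp
  rwa [he] at h

/-- The polynomials `f₁(X) = X⁷ - 7X + 3` and
`f₂(X) = X⁷ + 14X⁴ - 42X² - 21X + 9` are both irreducible over `ℚ`. -/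
theorem f1_f2_irreducible :
    Irreducible ((X : ℚ[X]) ^ 7 - 7 * X + 3) ∧
      Irreducible ((X : ℚ[X]) ^ 7 + 14 * X ^ 4 - 42 * X ^ 2 - 21 * X + 9) := by
  exact ⟨f1_irred, f2_irred⟩
end

section
/- Let p ∤ |G| for a finite group G, and let M be a finitely generated ℤ_p[G]-module. For subgroups H₁, H₂ ≤ G with ℤ_p[G/H₁] ≅ ℤ_p[G/H₂] as ℤ_p[G]-modules, the fixed-point modules M^{H₁} and M^{H₂} are isomorphic as ℤ_p-modules. -/
/-!
For any subgroup `H`, evaluating at the coset `H` identifies `G`-equivariant maps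
`ℤ_p[G/H] → M` with `M^H` (Frobenius reciprocity), the inverse sending an `H`-fixed `m`
to `gH ↦ g • m`. A `G`-isomorphism `ℤ_p[G/H₁] ≅ ℤ_p[G/H₂]` therefore induces, by
precomposition, an isomorphism `M^{H₁} ≅ M^{H₂}`.
-/

namespace Representation

section Permutation

variable (R G X : Type*) [CommSemiring R] [Monoid G] [MulAction G X]

/-- The permutation representation `R[X]`, on `X →₀ R` rather than on Mathlib's
`MonoidAlgebra` model used by `Representation.ofMulAction`. -/
noncomputable def ofMulActionFinsupp : Representation R G (X →₀ R) where
  toFun g := Finsupp.lmapDomain R R (g • ·)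
  map_one' := by ext; simp
  map_mul' g h := by ext; simp [mul_smul]

variable {R G X}

@[simp]
theorem ofMulActionFinsupp_single (g : G) (x : X) (r : R) :
    ofMulActionFinsupp R G X g (Finsupp.single x r) = Finsupp.single (g • x) r := by
  simp [ofMulActionFinsupp]

end Permutation

section CongrLeft

variable {A G V W U : Type*} [CommSemiring A] [Monoid G] [AddCommMonoid V] [AddCommMonoid W]
  [AddCommMonoid U] [Module A V] [Module A W] [Module A U] {ρ : Representation A G V}
  {σ : Representation A G W} (τ : Representation A G U)

def Equiv.intertwiningMapCongrLeft (φ : ρ.Equiv σ) :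
    IntertwiningMap σ τ ≃ₗ[A] IntertwiningMap ρ τ where
  toFun f := f.comp φ.toIntertwiningMap
  invFun f := f.comp φ.symm.toIntertwiningMap
  map_add' _ _ := rfl
  map_smul' _ _ := rfl
  left_inv f := by ext; simp
  right_inv f := by ext; simp

end CongrLeft

section Frobenius

variable {R G M : Type*} [CommRing R] [Group G] [AddCommGroup M] [Module R M]
  (ρ : Representation R G M) (H : Subgroup G)

theorem coe_invariants_comp_subtype :
    (invariants (ρ.comp H.subtype) : Set M) = {m | ∀ h ∈ H, ρ h m = m} := by
  ext m
  simp

def applyCoset (m : invariants (ρ.comp H.subtype)) : G ⧸ H → M :=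
  Quotient.lift (fun g => ρ g m) fun a b hab => by
    have hab : a⁻¹ * b ∈ H := QuotientGroup.leftRel_apply.mp hab
    calc ρ a m = ρ a (ρ (a⁻¹ * b) m) := congr_arg (ρ a) (m.2 ⟨_, hab⟩).symm
      _ = ρ b m := by rw [← Module.End.mul_apply, ← map_mul, mul_inv_cancel_left]

@[simp]
theorem applyCoset_mk (m : invariants (ρ.comp H.subtype)) (g : G) :
    applyCoset ρ H m g = ρ g m := rfl

noncomputable def invariantsCompSubtypeEquivIntertwiningMap :
    invariants (ρ.comp H.subtype) ≃ₗ[R] IntertwiningMap (ofMulActionFinsupp R G (G ⧸ H)) ρ where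
  toFun m :=
    { toLinearMap := Finsupp.lift M R (G ⧸ H) (applyCoset ρ H m)
      isIntertwining' g := by
        ext q
        induction q using QuotientGroup.induction_on
        simp [← Module.End.mul_apply, ← map_mul] }
  invFun f := ⟨f (Finsupp.single (1 : G) 1), fun h => by
    have hh : ((h : G) : G ⧸ H) = (1 : G) := QuotientGroup.eq.mpr (by simp)
    simp [← f.isIntertwining, hh]⟩
  map_add' m n := by
    ext q
    induction q using QuotientGroup.induction_on
    simp
  map_smul' c m := by
    ext q
    induction q using QuotientGroup.induction_on
    simp
  left_inv m := by ext; simp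
  right_inv f := by
    ext q
    induction q using QuotientGroup.induction_on
    simp [← f.isIntertwining]

end Frobenius

end Representation

open Representation

theorem fixed_points_iso_general (G : Type*) [Group G] (p : ℕ) [Fact p.Prime]
    (M : Type*) [AddCommGroup M] [Module ℤ_[p] M]
    (ρ : Representation ℤ_[p] G M)
    (H₁ H₂ : Subgroup G)
    (hiso : ∃ e : ((G ⧸ H₁) →₀ ℤ_[p]) ≃ₗ[ℤ_[p]] ((G ⧸ H₂) →₀ ℤ_[p]),
      ∀ (g : G) (x : (G ⧸ H₁) →₀ ℤ_[p]),
        e (Finsupp.mapDomain (fun c => g • c) x) = Finsupp.mapDomain (fun c => g • c) (e x))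
    (F₁ F₂ : Submodule ℤ_[p] M)
    (hF₁ : (F₁ : Set M) = {m : M | ∀ h ∈ H₁, ρ h m = m})
    (hF₂ : (F₂ : Set M) = {m : M | ∀ h ∈ H₂, ρ h m = m}) :
    Nonempty (↥F₁ ≃ₗ[ℤ_[p]] ↥F₂) := by
  obtain ⟨e, he⟩ := hiso
  let φ : (ofMulActionFinsupp ℤ_[p] G (G ⧸ H₁)).Equiv (ofMulActionFinsupp ℤ_[p] G (G ⧸ H₂)) :=
    .mk e fun g => LinearMap.ext (he g)
  obtain rfl : F₁ = invariants (ρ.comp H₁.subtype) :=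
    SetLike.coe_injective (hF₁.trans (coe_invariants_comp_subtype ρ H₁).symm)
  obtain rfl : F₂ = invariants (ρ.comp H₂.subtype) :=
    SetLike.coe_injective (hF₂.trans (coe_invariants_comp_subtype ρ H₂).symm)
  exact ⟨invariantsCompSubtypeEquivIntertwiningMap ρ H₁ ≪≫ₗ
    (φ.intertwiningMapCongrLeft ρ).symm ≪≫ₗ (invariantsCompSubtypeEquivIntertwiningMap ρ H₂).symm⟩

/-- Let `G` be a finite group, `p` a prime with `p ∤ |G|`, and `M` a finitely generated
`ℤ_p[G]`-module (given by a representation `ρ` of `G` on a finitely generated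
`ℤ_p`-module). For subgroups `H₁, H₂ ≤ G` with `ℤ_p[G/H₁] ≅ ℤ_p[G/H₂]` as
`ℤ_p[G]`-modules, the fixed-point modules `M^{H₁}` and `M^{H₂}` are isomorphic as
`ℤ_p`-modules. -/
theorem fixed_points_iso (G : Type*) [Group G] [Finite G] (p : ℕ) [Fact p.Prime]
    (hp : ¬ p ∣ Nat.card G) (M : Type*) [AddCommGroup M] [Module ℤ_[p] M]
    [Module.Finite ℤ_[p] M] (ρ : Representation ℤ_[p] G M)
    (H₁ H₂ : Subgroup G)
    (hiso : ∃ e : ((G ⧸ H₁) →₀ ℤ_[p]) ≃ₗ[ℤ_[p]] ((G ⧸ H₂) →₀ ℤ_[p]),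
      ∀ (g : G) (x : (G ⧸ H₁) →₀ ℤ_[p]),
        e (Finsupp.mapDomain (fun c => g • c) x) = Finsupp.mapDomain (fun c => g • c) (e x))
    (F₁ F₂ : Submodule ℤ_[p] M)
    (hF₁ : (F₁ : Set M) = {m : M | ∀ h ∈ H₁, ρ h m = m})
    (hF₂ : (F₂ : Set M) = {m : M | ∀ h ∈ H₂, ρ h m = m}) :
    Nonempty (↥F₁ ≃ₗ[ℤ_[p]] ↥F₂) :=
  fixed_points_iso_general G p M ρ H₁ H₂ hiso F₁ F₂ hF₁ hF₂
end
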